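/- For any finite simple graph G on n vertices, th_dim(G) = n − 1 if and only if th_dim(Ḡ) = n − 1, where Ḡ is the complement of G. -/

import Mathlib

open SimpleGraph Filter

/-- The `r`-truncated distance between vertices: `min(d(u,v), r+1)`. -/
noncomputable def truncDist {V : Type*} (G : SimpleGraph V) (r : ℕ) (u v : V) : ℕ∞ :=
  min (G.edist u v) (r + 1)

/-- `S` is a distance-`r` resolving set of `G`. -/
def IsDistResolving {V : Type*} (G : SimpleGraph V) (r : ℕ) (S : Finset V) : Prop :=
  ∀ x y : V, x ≠ y → ∃ v ∈ S, truncDist G r v x ≠ truncDist G r v y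

/-- The `r`-truncated metric dimension of `G`. -/
noncomputable def dimr {V : Type*} (G : SimpleGraph V) (r : ℕ) : ℕ :=
  sInf {k | ∃ S : Finset V, IsDistResolving G r S ∧ S.card = k}

/-- The metric dimension throttling number of `G`. -/
noncomputable def thDim {V : Type*} (G : SimpleGraph V) : ℕ :=
  sInf {m | ∃ r : ℕ, m = r + dimr G r}

/-- `S` is a resolving set of `G` (untruncated distances). -/
def IsResolving {V : Type*} (G : SimpleGraph V) (S : Finset V) : Prop :=
  ∀ x y : V, x ≠ y → ∃ v ∈ S, G.edist v x ≠ G.edist v y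

/-- The metric dimension of `G`. -/
noncomputable def metricDim {V : Type*} (G : SimpleGraph V) : ℕ :=
  sInf {k | ∃ S : Finset V, IsResolving G S ∧ S.card = k}

/-- Distance from an edge (as an unordered pair `{u,w}`) to a vertex:
`min(d(u,v), d(w,v))`. -/
noncomputable def edgeEDist {V : Type*} (G : SimpleGraph V) (e : Sym2 V) (v : V) : ℕ∞ :=
  Sym2.lift ⟨fun a b => min (G.edist a v) (G.edist b v), fun _ _ => min_comm _ _⟩ e

/-- The `r`-truncated distance from an edge to a vertex. -/
noncomputable def truncEdgeDist {V : Type*} (G : SimpleGraph V) (r : ℕ) (e : Sym2 V)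
    (v : V) : ℕ∞ :=
  min (edgeEDist G e v) (r + 1)

/-- `S` is a distance-`r` edge resolving set of `G`. -/
def IsEdgeResolving {V : Type*} (G : SimpleGraph V) (r : ℕ) (S : Finset V) : Prop :=
  ∀ e ∈ G.edgeSet, ∀ f ∈ G.edgeSet, e ≠ f →
    ∃ v ∈ S, truncEdgeDist G r e v ≠ truncEdgeDist G r f v

/-- The `r`-truncated edge metric dimension of `G`. -/
noncomputable def edimr {V : Type*} (G : SimpleGraph V) (r : ℕ) : ℕ :=
  sInf {k | ∃ S : Finset V, IsEdgeResolving G r S ∧ S.card = k}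

/-- The edge metric dimension throttling number of `G`. -/
noncomputable def thEdim {V : Type*} (G : SimpleGraph V) : ℕ :=
  sInf {m | ∃ r : ℕ, m = r + edimr G r}

/-- An item of `G` is a vertex or an edge; distance from an item to a vertex. -/
noncomputable def itemEDist {V : Type*} (G : SimpleGraph V) : V ⊕ G.edgeSet → V → ℕ∞
  | Sum.inl u, v => G.edist u v
  | Sum.inr e, v => edgeEDist G (e : Sym2 V) v

/-- The `r`-truncated distance from an item to a vertex. -/
noncomputable def truncItemDist {V : Type*} (G : SimpleGraph V) (r : ℕ)
    (t : V ⊕ G.edgeSet) (v : V) : ℕ∞ :=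
  min (itemEDist G t v) (r + 1)

/-- `S` is a distance-`r` mixed resolving set of `G`. -/
def IsMixedResolving {V : Type*} (G : SimpleGraph V) (r : ℕ) (S : Finset V) : Prop :=
  ∀ t₁ t₂ : V ⊕ G.edgeSet, t₁ ≠ t₂ →
    ∃ v ∈ S, truncItemDist G r t₁ v ≠ truncItemDist G r t₂ v

/-- The `r`-truncated mixed metric dimension of `G`. -/
noncomputable def mdimr {V : Type*} (G : SimpleGraph V) (r : ℕ) : ℕ :=
  sInf {k | ∃ S : Finset V, IsMixedResolving G r S ∧ S.card = k}

/-- The mixed metric dimension throttling number of `G`. -/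
noncomputable def thMdim {V : Type*} (G : SimpleGraph V) : ℕ :=
  sInf {m | ∃ r : ℕ, m = r + mdimr G r}

/-- `S` is a mixed resolving set of `G` (untruncated distances). -/
def IsMixedResolvingSet {V : Type*} (G : SimpleGraph V) (S : Finset V) : Prop :=
  ∀ t₁ t₂ : V ⊕ G.edgeSet, t₁ ≠ t₂ → ∃ v ∈ S, itemEDist G t₁ v ≠ itemEDist G t₂ v

/-- The mixed metric dimension of `G`. -/
noncomputable def mixedDim {V : Type*} (G : SimpleGraph V) : ℕ :=
  sInf {k | ∃ S : Finset V, IsMixedResolvingSet G S ∧ S.card = k}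

/-
Taking `r = 0` shows `th_dim(G) ≤ n - 1`, and `dim_0(G) = n - 1`. A 1-truncated distance only
records whether two vertices are equal, adjacent or non-adjacent, so distance-1 resolving sets of
`G` and `Ḡ` coincide and `dim_1(G) = dim_1(Ḡ)`. It therefore suffices to show that
`th_dim(G) = n - 1` as soon as `1 + dim_1(G) ≥ n - 1`, i.e. that `r + dim_r(G) < n - 1` for some
`r ≥ 2` forces `dim_1(G) ≤ n - 3`.

Vertices outside a module `B` (a set that every outer vertex sees entirely or not at all) are
equidistant from all members of `B`. So if `S` resolves `G`, no set of at least two vertices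
outside `S` is a module: some `u ∈ S` is adjacent to exactly one of two such vertices, and no two
of them are twins. Given four vertices outside `S`, split by `u`, a short case analysis on the two
sides of `u` yields three of them such that each pair is separated, by adjacency, by a vertex
outside the triple; the complement of that triple is then a distance-1 resolving set.
-/
section

variable {V : Type*}

def SimpleGraph.Separates (G : SimpleGraph V) (v a b : V) : Prop :=
  ¬(G.Adj v a ↔ G.Adj v b)

namespace SimpleGraph.Separates

variable {G : SimpleGraph V} {v a b : V}

theorem symm (h : G.Separates v a b) : G.Separates v b a :=
  fun h' => h h'.symm

theorem ne (h : G.Separates v a b) : a ≠ b := by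
  rintro rfl
  exact h Iff.rfl

end SimpleGraph.Separates

section truncDist

variable {G : SimpleGraph V} {r : ℕ} {u v a b : V}

theorem truncDist_eq_zero_iff : truncDist G r u v = 0 ↔ u = v := by
  simp [truncDist]

theorem truncDist_self : truncDist G r u u = 0 :=
  truncDist_eq_zero_iff.mpr rfl

theorem truncDist_self_eq_iff : truncDist G r u u = truncDist G r u v ↔ u = v := by
  rw [truncDist_self, eq_comm, truncDist_eq_zero_iff]

theorem truncDist_eq_self_iff : truncDist G r u v = truncDist G r u u ↔ u = v := by
  rw [eq_comm, truncDist_self_eq_iff]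

theorem truncDist_zero_of_ne (h : u ≠ v) : truncDist G 0 u v = 1 := by
  have : 1 ≤ G.edist u v := Order.one_le_iff_pos.mpr (edist_pos_of_ne h)
  simpa [truncDist] using this

theorem truncDist_one_of_adj (h : G.Adj u v) : truncDist G 1 u v = 1 := by
  rw [truncDist, edist_eq_one_iff_adj.mpr h]
  norm_num

theorem truncDist_one_of_not_adj (hne : u ≠ v) (h : ¬G.Adj u v) : truncDist G 1 u v = 2 := by
  have h1 : G.edist u v ≠ 1 := mt edist_eq_one_iff_adj.mp h
  have h2 : 2 ≤ G.edist u v := by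
    have := Order.one_le_iff_pos.mpr (edist_pos_of_ne (G := G) hne)
    exact Order.add_one_le_of_lt (lt_of_le_of_ne this h1.symm)
  simpa [truncDist, one_add_one_eq_two] using h2

theorem truncDist_one_eq_iff (ha : v ≠ a) (hb : v ≠ b) :
    truncDist G 1 v a = truncDist G 1 v b ↔ (G.Adj v a ↔ G.Adj v b) := by
  by_cases hva : G.Adj v a <;> by_cases hvb : G.Adj v b <;>
    simp [hva, hvb, truncDist_one_of_adj, truncDist_one_of_not_adj, ha, hb]

theorem edist_ne_of_truncDist_ne (h : truncDist G r u a ≠ truncDist G r u b) :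
    G.edist u a ≠ G.edist u b :=
  fun he => h (by rw [truncDist, truncDist, he])

theorem truncDist_one_compl_eq_iff :
    truncDist Gᶜ 1 v a = truncDist Gᶜ 1 v b ↔ truncDist G 1 v a = truncDist G 1 v b := by
  rcases eq_or_ne v a with rfl | ha
  · simp only [truncDist_self_eq_iff]
  rcases eq_or_ne v b with rfl | hb
  · simp only [truncDist_eq_self_iff]
  simp only [truncDist_one_eq_iff ha hb, compl_adj, ha, hb, ne_eq, not_false_eq_true, true_and]
  tauto

end truncDist

section dimr

variable {G : SimpleGraph V} {r : ℕ} {S : Finset V}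

theorem dimr_le_card (h : IsDistResolving G r S) : dimr G r ≤ S.card :=
  Nat.sInf_le ⟨S, h, rfl⟩

theorem isDistResolving_one_compl_iff : IsDistResolving Gᶜ 1 S ↔ IsDistResolving G 1 S := by
  simp only [IsDistResolving, ne_eq, truncDist_one_compl_eq_iff]

theorem dimr_one_compl : dimr Gᶜ 1 = dimr G 1 := by
  simp only [dimr, isDistResolving_one_compl_iff]

theorem isDistResolving_of_forall_notMem
    (h : ∀ a ∉ S, ∀ b ∉ S, a ≠ b → ∃ v ∈ S, truncDist G r v a ≠ truncDist G r v b) :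
    IsDistResolving G r S := by
  intro x y hxy
  by_cases hx : x ∈ S
  · exact ⟨x, hx, truncDist_self_eq_iff.not.mpr hxy⟩
  by_cases hy : y ∈ S
  · exact ⟨y, hy, truncDist_eq_self_iff.not.mpr hxy.symm⟩
  exact h x hx y hy hxy

variable [Fintype V]

theorem isDistResolving_erase_univ [DecidableEq V] (r : ℕ) (x : V) :
    IsDistResolving G r (Finset.univ.erase x) :=
  isDistResolving_of_forall_notMem fun a ha b hb hab => by
    simp only [Finset.mem_erase, Finset.mem_univ, and_true, not_not] at ha hb
    exact absurd (ha.trans hb.symm) hab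

theorem exists_isDistResolving_card_eq_dimr (G : SimpleGraph V) (r : ℕ) :
    ∃ S : Finset V, IsDistResolving G r S ∧ S.card = dimr G r := by
  have : {k | ∃ S : Finset V, IsDistResolving G r S ∧ S.card = k}.Nonempty :=
    ⟨_, Finset.univ, fun x _ hxy => ⟨x, Finset.mem_univ x, truncDist_self_eq_iff.not.mpr hxy⟩,
      rfl⟩
  exact Nat.sInf_mem this

theorem dimr_zero (G : SimpleGraph V) : dimr G 0 = Fintype.card V - 1 := by
  classical
  apply le_antisymm
  · cases isEmpty_or_nonempty V
    · simpa using dimr_le_card (G := G) (r := 0) (S := ∅) fun x => isEmptyElim x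
    · obtain ⟨x⟩ := ‹Nonempty V›
      simpa using dimr_le_card (isDistResolving_erase_univ (G := G) 0 x)
  obtain ⟨S, hS, hcard⟩ := exists_isDistResolving_card_eq_dimr G 0
  by_contra! hlt
  obtain ⟨x, hx, y, hy, hxy⟩ :=
    (Finset.one_lt_card (s := Sᶜ)).mp (by rw [Finset.card_compl]; omega)
  obtain ⟨v, hv, hne⟩ := hS x y hxy
  rw [Finset.mem_compl] at hx hy
  rw [truncDist_zero_of_ne (ne_of_mem_of_not_mem hv hx),
    truncDist_zero_of_ne (ne_of_mem_of_not_mem hv hy)] at hne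
  exact hne rfl

end dimr

section module

variable {G : SimpleGraph V} {B : Set V}

theorem edist_le_length_of_forall_adj_iff
    (hB : ∀ v ∉ B, ∀ a ∈ B, ∀ b ∈ B, (G.Adj v a ↔ G.Adj v b)) {v b : V} (p : G.Walk v b)
    (hv : v ∉ B) (hb : b ∈ B) {a : V} (ha : a ∈ B) : G.edist v a ≤ p.length := by
  induction p with
  | nil => exact absurd hb hv
  | @cons v w b hvw q ih =>
    rw [Walk.length_cons, Nat.cast_add, Nat.cast_one]
    by_cases hw : w ∈ B
    · rw [edist_eq_one_iff_adj.mpr ((hB v hv w hw a ha).mp hvw)]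
      exact le_add_self
    · calc G.edist v a ≤ G.edist v w + G.edist w a := SimpleGraph.edist_triangle
        _ ≤ 1 + q.length := add_le_add (edist_eq_one_iff_adj.mpr hvw).le (ih hw hb)
        _ = q.length + 1 := add_comm _ _

theorem edist_eq_of_forall_adj_iff
    (hB : ∀ v ∉ B, ∀ a ∈ B, ∀ b ∈ B, (G.Adj v a ↔ G.Adj v b)) {v a b : V} (hv : v ∉ B)
    (ha : a ∈ B) (hb : b ∈ B) : G.edist v a = G.edist v b := by
  have key : ∀ {a b : V}, a ∈ B → b ∈ B → G.edist v a ≤ G.edist v b := by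
    intro a b ha hb
    by_cases htop : G.edist v b = ⊤
    · exact htop ▸ le_top
    obtain ⟨p, hp⟩ := exists_walk_of_edist_ne_top htop
    exact hp ▸ edist_le_length_of_forall_adj_iff hB p hv hb ha
  exact le_antisymm (key ha hb) (key hb ha)

theorem exists_separates_of_isDistResolving {r : ℕ} {S : Finset V}
    (hS : IsDistResolving G r S) (hBS : ∀ x ∈ B, x ∉ S) {a b : V} (ha : a ∈ B) (hb : b ∈ B)
    (hab : a ≠ b) : ∃ v ∉ B, ∃ a' ∈ B, ∃ b' ∈ B, G.Separates v a' b' := by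
  by_contra! hB
  simp only [Separates, not_not] at hB
  obtain ⟨u, hu, hne⟩ := hS a b hab
  exact edist_ne_of_truncDist_ne hne
    (edist_eq_of_forall_adj_iff hB (fun huB => hBS u huB hu) ha hb)

theorem exists_separates_of_isDistResolving_of_notMem {r : ℕ} {S : Finset V}
    (hS : IsDistResolving G r S) {a b : V} (ha : a ∉ S) (hb : b ∉ S) (hab : a ≠ b) :
    ∃ v, v ≠ a ∧ v ≠ b ∧ G.Separates v a b := by
  obtain ⟨v, hv, a', ha', b', hb', hsep⟩ := exists_separates_of_isDistResolving hS
    (B := {a, b}) (by rintro x (rfl | rfl) <;> assumption) (.inl rfl) (.inr rfl) hab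
  simp only [Set.mem_insert_iff, Set.mem_singleton_iff, not_or] at hv ha' hb'
  rcases ha' with rfl | rfl <;> rcases hb' with rfl | rfl
  · exact absurd rfl hsep.ne
  · exact ⟨v, hv.1, hv.2, hsep⟩
  · exact ⟨v, hv.1, hv.2, hsep.symm⟩
  · exact absurd rfl hsep.ne

end module

section triple

variable [Fintype V] [DecidableEq V] {G : SimpleGraph V}

theorem isDistResolving_one_compl_of_separates {T : Finset V}
    (h : ∀ a ∈ T, ∀ b ∈ T, a ≠ b → ∃ v ∉ T, G.Separates v a b) : IsDistResolving G 1 Tᶜ :=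
  isDistResolving_of_forall_notMem fun a ha b hb hab => by
    rw [Finset.notMem_compl] at ha hb
    obtain ⟨v, hv, hsep⟩ := h a ha b hb hab
    exact ⟨v, Finset.mem_compl.mpr hv, (truncDist_one_eq_iff (ne_of_mem_of_not_mem ha hv).symm
      (ne_of_mem_of_not_mem hb hv).symm).not.mpr hsep⟩

theorem dimr_one_add_card_le {T : Finset V}
    (h : ∀ a ∈ T, ∀ b ∈ T, a ≠ b → ∃ v ∉ T, G.Separates v a b) :
    dimr G 1 + T.card ≤ Fintype.card V := by
  have hdim := dimr_le_card (isDistResolving_one_compl_of_separates h)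
  rw [Finset.card_compl] at hdim
  have := T.card_le_univ
  omega

theorem dimr_one_add_three_le_of_separates {a b c : V}
    (hab : ∃ v ∉ ({a, b, c} : Finset V), G.Separates v a b)
    (hac : ∃ v ∉ ({a, b, c} : Finset V), G.Separates v a c)
    (hbc : ∃ v ∉ ({a, b, c} : Finset V), G.Separates v b c) :
    dimr G 1 + 3 ≤ Fintype.card V := by
  have hcard : ({a, b, c} : Finset V).card = 3 :=
    Finset.card_eq_three.mpr ⟨a, b, c, hab.choose_spec.2.ne, hac.choose_spec.2.ne,
      hbc.choose_spec.2.ne, rfl⟩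
  have symm {x y : V} (h : ∃ v ∉ ({a, b, c} : Finset V), G.Separates v x y) :
      ∃ v ∉ ({a, b, c} : Finset V), G.Separates v y x :=
    h.imp fun _ => And.imp_right Separates.symm
  refine hcard ▸ dimr_one_add_card_le fun x hx y hy hxy => ?_
  simp only [Finset.mem_insert, Finset.mem_singleton] at hx hy
  rcases hx with rfl | rfl | rfl <;> rcases hy with rfl | rfl | rfl <;>
    first | exact absurd rfl hxy | assumption | exact symm ‹_›

theorem dimr_one_add_three_le_of_not_separates {u a b c : V}
    (hu : u ∉ ({a, b, c} : Finset V)) (hac : G.Separates u a c) (hbc : G.Separates u b c)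
    (hc : ¬G.Separates c a b) (hab : ∃ v, v ≠ a ∧ v ≠ b ∧ G.Separates v a b) :
    dimr G 1 + 3 ≤ Fintype.card V := by
  obtain ⟨v, hva, hvb, hv⟩ := hab
  have hvc : v ≠ c := by
    rintro rfl
    exact hc hv
  exact dimr_one_add_three_le_of_separates ⟨v, by simp [hva, hvb, hvc], hv⟩ ⟨u, hu, hac⟩
    ⟨u, hu, hbc⟩

theorem dimr_one_add_three_le_of_two_two {u a b c d : V}
    (hu : u ∉ ({a, b, c, d} : Finset V)) (hac : G.Separates u a c) (had : G.Separates u a d)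
    (hbc : G.Separates u b c) (hbd : G.Separates u b d) (hcd : c ≠ d)
    (hab : ∃ v, v ≠ a ∧ v ≠ b ∧ G.Separates v a b) :
    dimr G 1 + 3 ≤ Fintype.card V := by
  by_cases hc : G.Separates c a b
  · refine dimr_one_add_three_le_of_separates
      ⟨c, by simp [hac.ne.symm, hbc.ne.symm, hcd], hc⟩ ⟨u, ?_, had⟩ ⟨u, ?_, hbd⟩ <;>
    · simp only [Finset.mem_insert, Finset.mem_singleton, not_or] at hu ⊢
      tauto
  · refine dimr_one_add_three_le_of_not_separates ?_ hac hbc hc hab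
    simp only [Finset.mem_insert, Finset.mem_singleton, not_or] at hu ⊢
    tauto

theorem dimr_one_add_three_le_of_lone {u x a b c : V}
    (hu : u ∉ ({x, a, b, c} : Finset V)) (hxa : G.Separates u x a) (hxb : G.Separates u x b)
    (hxc : G.Separates u x c) (hab : ∃ v, v ≠ a ∧ v ≠ b ∧ G.Separates v a b)
    (hac : ∃ v, v ≠ a ∧ v ≠ c ∧ G.Separates v a c)
    (hbc : ∃ v, v ≠ b ∧ v ≠ c ∧ G.Separates v b c) :
    dimr G 1 + 3 ≤ Fintype.card V := by
  simp only [Finset.mem_insert, Finset.mem_singleton, not_or] at hu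
  -- `x` cannot be adjacent to exactly one end of each of the three pairs.
  have : ¬G.Separates x a b ∨ ¬G.Separates x a c ∨ ¬G.Separates x b c := by
    simp only [Separates]
    tauto
  rcases this with h | h | h
  · exact dimr_one_add_three_le_of_not_separates (by simp [hu]) hxa.symm hxb.symm h hab
  · exact dimr_one_add_three_le_of_not_separates (by simp [hu]) hxa.symm hxc.symm h hac
  · exact dimr_one_add_three_le_of_not_separates (by simp [hu]) hxb.symm hxc.symm h hbc

end triple

theorem dimr_one_add_three_le_of_isDistResolving [Fintype V] [DecidableEq V]
    {G : SimpleGraph V} {r : ℕ} {S : Finset V} (hS : IsDistResolving G r S)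
    (hS4 : 4 ≤ Sᶜ.card) : dimr G 1 + 3 ≤ Fintype.card V := by
  obtain ⟨a, ha, b, hb, hab⟩ := (Finset.one_lt_card (s := Sᶜ)).mp (by omega)
  obtain ⟨u, hu, p, hp, q, hq, hpq⟩ := exists_separates_of_isDistResolving hS
    (B := ↑Sᶜ) (fun _ h => Finset.mem_compl.mp h) ha hb hab
  simp only [Finset.coe_compl, Set.mem_compl_iff, Finset.mem_coe, not_not] at hu hp hq
  have hq' : q ∈ Sᶜ.erase p := Finset.mem_erase.mpr ⟨hpq.ne.symm, Finset.mem_compl.mpr hq⟩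
  obtain ⟨x, hx, y, hy, hxy⟩ := (Finset.one_lt_card (s := (Sᶜ.erase p).erase q)).mp (by
    rw [Finset.card_erase_of_mem hq', Finset.card_erase_of_mem (Finset.mem_compl.mpr hp)]
    omega)
  simp only [Finset.mem_erase, Finset.mem_compl] at hx hy
  obtain ⟨hxq, hxp, hx⟩ := hx
  obtain ⟨hyq, hyp, hy⟩ := hy
  have twin {a b : V} (ha : a ∉ S) (hb : b ∉ S) (hab : a ≠ b) :=
    exists_separates_of_isDistResolving_of_notMem hS ha hb hab
  have hup := ne_of_mem_of_not_mem hu hp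
  have huq := ne_of_mem_of_not_mem hu hq
  have hux := ne_of_mem_of_not_mem hu hx
  have huy := ne_of_mem_of_not_mem hu hy
  by_cases hpx : G.Separates u p x <;> by_cases hpy : G.Separates u p y
  · exact dimr_one_add_three_le_of_lone (by simp [hup, huq, hux, huy]) hpq hpx hpy
      (twin hq hx hxq.symm) (twin hq hy hyq.symm) (twin hx hy hxy)
  · have syq : G.Separates u y q := by simp only [Separates] at hpq hpy ⊢; tauto
    have syx : G.Separates u y x := by simp only [Separates] at hpx hpy ⊢; tauto
    exact dimr_one_add_three_le_of_two_two (by simp [hup, huq, hux, huy]) hpq hpx syq syx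
      hxq.symm (twin hp hy hyp.symm)
  · have sxq : G.Separates u x q := by simp only [Separates] at hpq hpx ⊢; tauto
    have sxy : G.Separates u x y := by simp only [Separates] at hpx hpy ⊢; tauto
    exact dimr_one_add_three_le_of_two_two (by simp [hup, huq, hux, huy]) hpq hpy sxq sxy
      hyq.symm (twin hp hx hxp.symm)
  · have sqx : G.Separates u q x := by simp only [Separates] at hpq hpx ⊢; tauto
    have sqy : G.Separates u q y := by simp only [Separates] at hpq hpy ⊢; tauto
    exact dimr_one_add_three_le_of_lone (by simp [hup, huq, hux, huy]) hpq.symm sqx sqy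
      (twin hp hx hxp.symm) (twin hp hy hyp.symm) (twin hx hy hxy)

theorem thDim_eq_card_sub_one_iff [Fintype V] (G : SimpleGraph V) :
    thDim G = Fintype.card V - 1 ↔ Fintype.card V - 1 ≤ 1 + dimr G 1 := by
  classical
  have hle (r : ℕ) : thDim G ≤ r + dimr G r := Nat.sInf_le ⟨r, rfl⟩
  refine ⟨fun h => h ▸ hle 1, fun h => le_antisymm (by simpa [dimr_zero] using hle 0) ?_⟩
  obtain ⟨r, hr⟩ : thDim G ∈ {m | ∃ r : ℕ, m = r + dimr G r} := Nat.sInf_mem ⟨_, 0, rfl⟩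
  rw [hr]
  match r with
  | 0 => rw [dimr_zero]; omega
  | 1 => exact h
  | r + 2 =>
    by_contra! hlt
    obtain ⟨S, hS, hcard⟩ := exists_isDistResolving_card_eq_dimr G (r + 2)
    have := dimr_one_add_three_le_of_isDistResolving hS (by rw [Finset.card_compl]; omega)
    omega

end

/-- `th_dim(G) = n - 1` iff `th_dim(Ḡ) = n - 1`. -/
theorem stmt12 {V : Type*} [Fintype V] (G : SimpleGraph V) :
    thDim G = Fintype.card V - 1 ↔ thDim Gᶜ = Fintype.card V - 1 := by
  rw [thDim_eq_card_sub_one_iff, thDim_eq_card_sub_one_iff, dimr_one_compl]
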